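/- arXiv:1810.00595 — 3 statements merged into one kernel-verified Lean document; each statement's English description precedes it below -/
import Mathlib

section
/- Let f_1,...,f_n : ℝ → ℝ be convex increasing functions and C > 0. Let (x*, y*, p*) be a saddle point (primal-dual solution) of the problem: minimize ∑_k f_k(x_k) subject to ∑_k y_k ≥ C, x_k ≥ y_k, x_k ≥ 0, y_k ≥ 0, with dual variables p_k ≥ 0 for the constraints x_k ≥ y_k. Then ∑_{k=1}^n p*_k ≤ (n/C)·(∑_k f_k(2C/n) − ∑_k f_k(0)). -/
/-- Bound on the sum of optimal dual variables of the resource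
allocation problem (P), given a saddle point of the Lagrangian. -/
theorem dual_sum_bound (n : ℕ) (hn : 1 ≤ n) (C : ℝ) (hC : 0 < C)
    (f : Fin n → ℝ → ℝ)
    (hconv : ∀ k, ConvexOn ℝ Set.univ (f k))
    (hmono : ∀ k, Monotone (f k))
    (xs ys ps : Fin n → ℝ)
    (hys : C ≤ ∑ k, ys k) (hy0 : ∀ k, 0 ≤ ys k) (hx0 : ∀ k, 0 ≤ xs k)
    (hp0 : ∀ k, 0 ≤ ps k)
    (hsaddle_p : ∀ p : Fin n → ℝ, (∀ k, 0 ≤ p k) →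
      (∑ k, f k (xs k)) + ∑ k, p k * (ys k - xs k) ≤
      (∑ k, f k (xs k)) + ∑ k, ps k * (ys k - xs k))
    (hsaddle_xy : ∀ x y : Fin n → ℝ, C ≤ (∑ k, y k) → (∀ k, 0 ≤ y k) → (∀ k, 0 ≤ x k) →
      (∑ k, f k (xs k)) + ∑ k, ps k * (ys k - xs k) ≤
      (∑ k, f k (x k)) + ∑ k, ps k * (y k - x k)) :
    (∑ k, ps k) ≤ ((n : ℝ) / C) * ((∑ k, f k (2 * C / n)) - ∑ k, f k 0) := by
  have hn0 : (0 : ℝ) < (n : ℝ) := by exact_mod_cast Nat.lt_of_lt_of_le Nat.zero_lt_one hn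
  -- complementary slackness nonnegativity
  have h0 : (0 : ℝ) ≤ ∑ k, ps k * (ys k - xs k) := by
    have := hsaddle_p (fun _ => 0) (fun _ => le_refl 0)
    simpa using this
  -- plug in the Slater point
  have hsum : (∑ _k : Fin n, C / (n : ℝ)) = C := by
    rw [Finset.sum_const, Finset.card_univ, Fintype.card_fin, nsmul_eq_mul]
    field_simp
  have h2 := hsaddle_xy (fun _ => 2 * C / n) (fun _ => C / n)
    (by rw [hsum]) (fun _ => by positivity) (fun _ => by positivity)
  have hf0 : (∑ k, f k 0) ≤ ∑ k, f k (xs k) :=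
    Finset.sum_le_sum fun k _ => hmono k (hx0 k)
  have hps : (∑ k, ps k * (C / n - 2 * C / n)) = -(C / n) * ∑ k, ps k := by
    rw [Finset.mul_sum]
    congr 1; ext k; ring
  rw [hps] at h2
  have key : (∑ k, f k 0) + (C / n) * ∑ k, ps k ≤ ∑ k, f k (2 * C / n) := by
    nlinarith [hf0, h0, h2]
  have hCn : (0 : ℝ) < C / n := by positivity
  calc (∑ k, ps k) = ((n:ℝ)/C) * ((C/n) * ∑ k, ps k) := by field_simp
    _ ≤ ((n:ℝ)/C) * ((∑ k, f k (2 * C / n)) - ∑ k, f k 0) :=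
        mul_le_mul_of_nonneg_left (by linarith) (by positivity)
end

section
/- Let γ > 0 and q ∈ ℝ^n. The minimizer p* of the function p ↦ max_{k}(−p_k) + (1/(2γ))·‖p − q‖₂² over the set {p ∈ ℝ^n : p ≥ 0} is given as follows: if ∑_{k=1}^n max(−q_k, 0) ≥ γ, then p*_k = max(q_k, 0) for all k; otherwise there exists a unique η > 0 with ∑_{k=1}^n max(η − q_k, 0) = γ, and p*_k = max(η, q_k) for all k. -/
theorem min_aux (n : ℕ) (hn : 0 < n) (γ : ℝ) (hγ : 0 < γ) (q pstar m : Fin n → ℝ) (c : ℝ)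
    (hmdef : ∀ k, pstar k - q k = m k)
    (hm0 : ∀ k, 0 ≤ m k)
    (hmp : ∀ k, m k * pstar k = m k * c)
    (hS : γ ≤ ∑ k, m k)
    (hc : c * ((∑ k, m k) - γ) ≤ 0)
    (hsup : (⨆ k, -pstar k) = -c) :
    IsMinOn (fun p : Fin n → ℝ => (⨆ k, -p k) + (1 / (2 * γ)) * ∑ k, (p k - q k) ^ 2)
      {p : Fin n → ℝ | ∀ k, 0 ≤ p k} pstar := by
  haveI : Nonempty (Fin n) := Fin.pos_iff_nonempty.mp hn
  rw [isMinOn_iff]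
  intro p hp
  simp only [Set.mem_setOf_eq] at hp
  set M := ⨆ k, -p k with hM
  have hM1 : ∀ k, -p k ≤ M := fun k => le_ciSup (Set.Finite.bddAbove (Set.finite_range fun j => -p j)) k
  have hM0 : M ≤ 0 := ciSup_le fun k => neg_nonpos.mpr (hp k)
  have h1 : ∑ k, (m k ^ 2 - 2 * (M + c) * m k) ≤ ∑ k, (p k - q k) ^ 2 := by
    apply Finset.sum_le_sum
    intro k _
    have e1 := hmdef k
    have e2 := hm0 k
    have e3 := hmp k
    have e4 := hM1 k
    have heq : (p k - q k) ^ 2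
        = (p k - pstar k) ^ 2 + 2 * (m k * p k - m k * pstar k) + m k ^ 2 := by
      rw [← e1]; ring
    have h5 : m k * (-p k) ≤ m k * M := mul_le_mul_of_nonneg_left e4 e2
    nlinarith [sq_nonneg (p k - pstar k)]
  have h2 : ∑ k, (m k ^ 2 - 2 * (M + c) * m k)
      = (∑ k, m k ^ 2) - 2 * (M + c) * (∑ k, m k) := by
    rw [Finset.sum_sub_distrib, ← Finset.mul_sum]
  have hMS : M * ((∑ k, m k) - γ) ≤ 0 :=
    mul_nonpos_of_nonpos_of_nonneg hM0 (by linarith)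
  have hB : (∑ k, m k ^ 2) - 2 * (M + c) * γ ≤ ∑ k, (p k - q k) ^ 2 := by
    nlinarith
  have hpq : ∑ k, (pstar k - q k) ^ 2 = ∑ k, m k ^ 2 := by
    apply Finset.sum_congr rfl; intro k _; rw [hmdef k]
  simp only [hsup, hpq]
  have h2γ : (0:ℝ) < 2 * γ := by linarith
  have hd : 1 / (2 * γ) * ((∑ k, m k ^ 2) - 2 * (M + c) * γ)
      = 1 / (2 * γ) * (∑ k, m k ^ 2) - (M + c) := by
    field_simp
  have := mul_le_mul_of_nonneg_left hB (le_of_lt (one_div_pos.mpr h2γ))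
  rw [hd] at this
  linarith

theorem sum_max_lt (n : ℕ) (q : Fin n → ℝ) (a b : ℝ) (hab : a < b)
    (hpos : ∃ k, 0 < max (a - q k) 0) :
    (∑ k, max (a - q k) 0) < ∑ k, max (b - q k) 0 := by
  obtain ⟨k0, hk0⟩ := hpos
  apply Finset.sum_lt_sum
  · intro k _
    exact max_le_max (sub_le_sub_right hab.le _) le_rfl
  · refine ⟨k0, Finset.mem_univ _, ?_⟩
    have h1 : max (a - q k0) 0 = a - q k0 := by
      rcases max_cases (a - q k0) 0 with ⟨h, _⟩ | ⟨h, _⟩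
      · exact h
      · rw [h] at hk0; exact absurd hk0 (lt_irrefl 0)
    have h2 : a - q k0 < b - q k0 := by linarith
    calc max (a - q k0) 0 = a - q k0 := h1
      _ < b - q k0 := h2
      _ ≤ max (b - q k0) 0 := le_max_left _ _

theorem exists_pos_term (n : ℕ) (γ : ℝ) (hγ : 0 < γ) (f : Fin n → ℝ)
    (hS : γ ≤ ∑ k, max (f k) 0) : ∃ k, 0 < max (f k) 0 := by
  by_contra h
  push_neg at h
  have : (∑ k, max (f k) 0) ≤ 0 := Finset.sum_nonpos fun k _ => h k
  linarith

/-- Closed form for the minimizer of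
`p ↦ max_k (−p_k) + (1/(2γ))‖p − q‖₂²` over the nonnegative orthant. -/
theorem prox_closed_form (n : ℕ) (hn : 0 < n) (γ : ℝ) (hγ : 0 < γ) (q : Fin n → ℝ) :
    (γ ≤ (∑ k, max (-q k) 0) →
      IsMinOn (fun p : Fin n → ℝ => (⨆ k, -p k) + (1 / (2 * γ)) * ∑ k, (p k - q k) ^ 2)
        {p : Fin n → ℝ | ∀ k, 0 ≤ p k} (fun k => max (q k) 0)) ∧
    ((∑ k, max (-q k) 0) < γ →
      ∃! η : ℝ, 0 < η ∧ (∑ k, max (η - q k) 0) = γ ∧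
        IsMinOn (fun p : Fin n → ℝ => (⨆ k, -p k) + (1 / (2 * γ)) * ∑ k, (p k - q k) ^ 2)
          {p : Fin n → ℝ | ∀ k, 0 ≤ p k} (fun k => max η (q k))) := by
  haveI : Nonempty (Fin n) := Fin.pos_iff_nonempty.mp hn
  constructor
  · -- Case 1
    intro hS
    have hpos : ∃ k, 0 < max (-q k) 0 := exists_pos_term n γ hγ _ hS
    obtain ⟨k0, hk0⟩ := hpos
    have hq0 : q k0 < 0 := by
      by_contra h
      push_neg at h
      rw [max_eq_right (by linarith : -q k0 ≤ 0)] at hk0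
      exact absurd hk0 (lt_irrefl 0)
    apply min_aux n hn γ hγ q _ (fun k => max (-q k) 0) 0
    · intro k
      rcases le_total 0 (q k) with h | h
      · rw [max_eq_left h, max_eq_right (by linarith : -q k ≤ 0)]; ring
      · rw [max_eq_right h, max_eq_left (by linarith : (0:ℝ) ≤ -q k)]; ring
    · intro k; exact le_max_right _ _
    · intro k
      rcases le_total 0 (q k) with h | h
      · rw [max_eq_right (by linarith : -q k ≤ 0)]; ring
      · rw [max_eq_right h]
    · exact hS
    · simp
    · rw [show -(0:ℝ) = 0 by ring]
      apply le_antisymm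
      · exact ciSup_le fun k => neg_nonpos.mpr (le_max_right _ _)
      · have h0 : -(max (q k0) 0) = 0 := by rw [max_eq_right hq0.le]; ring
        calc (0:ℝ) = -(max (q k0) 0) := h0.symm
          _ ≤ ⨆ k, -(max (q k) 0) :=
            le_ciSup (Set.Finite.bddAbove (Set.finite_range fun j => -(max (q j) 0))) k0
  · -- Case 2
    intro hlt
    set g : ℝ → ℝ := fun η => ∑ k, max (η - q k) 0 with hg
    have hgc : Continuous g :=
      continuous_finset_sum _ fun k _ => (continuous_id.sub continuous_const).max continuous_const
    have hg0 : g 0 = ∑ k, max (-q k) 0 := by simp [hg]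
    set k0 : Fin n := ⟨0, hn⟩
    set b : ℝ := max 0 (γ + q k0 + 1) with hb
    have hb0 : (0:ℝ) ≤ b := le_max_left _ _
    have hgb : γ ≤ g b := by
      have h1 : γ + q k0 + 1 ≤ b := le_max_right _ _
      have h2 : γ + 1 ≤ max (b - q k0) 0 := le_trans (by linarith) (le_max_left _ _)
      have h3 : max (b - q k0) 0 ≤ g b :=
        Finset.single_le_sum (f := fun k => max (b - q k) 0)
          (fun k _ => le_max_right _ 0) (Finset.mem_univ k0)
      linarith
    have hmem : γ ∈ Set.Icc (g 0) (g b) := ⟨by rw [hg0]; exact hlt.le, hgb⟩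
    obtain ⟨η, hηmem, hgη⟩ := intermediate_value_Icc hb0 hgc.continuousOn hmem
    have hηpos : 0 < η := by
      rcases lt_or_eq_of_le hηmem.1 with h | h
      · exact h
      · exfalso; rw [← h] at hgη; rw [hg0] at hgη; linarith
    have hterm : ∃ k, 0 < max (η - q k) 0 :=
      exists_pos_term n γ hγ (fun k => η - q k) (le_of_eq hgη.symm)
    obtain ⟨k1, hk1⟩ := hterm
    have hgη' : (∑ k, max (η - q k) 0) = γ := hgη
    have hqk1 : q k1 < η := by
      by_contra h
      push_neg at h
      rw [max_eq_right (by linarith : η - q k1 ≤ 0)] at hk1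
      exact absurd hk1 (lt_irrefl 0)
    have hmin : IsMinOn (fun p : Fin n → ℝ => (⨆ k, -p k) + (1 / (2 * γ)) * ∑ k, (p k - q k) ^ 2)
        {p : Fin n → ℝ | ∀ k, 0 ≤ p k} (fun k => max η (q k)) := by
      apply min_aux n hn γ hγ q _ (fun k => max (η - q k) 0) η
      · intro k
        rcases le_total (q k) η with h | h
        · rw [max_eq_left h, max_eq_left (by linarith : (0:ℝ) ≤ η - q k)]
        · rw [max_eq_right h, max_eq_right (by linarith : η - q k ≤ 0)]; ring
      · intro k; exact le_max_right _ _
      · intro k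
        rcases le_total (q k) η with h | h
        · rw [max_eq_left h]
        · rw [max_eq_right (by linarith : η - q k ≤ 0)]; ring
      · exact le_of_eq hgη'.symm
      · rw [hgη']; simp
      · apply le_antisymm
        · exact ciSup_le fun k => neg_le_neg (le_max_left _ _)
        · have h0 : -(max η (q k1)) = -η := by rw [max_eq_left hqk1.le]
          calc -η = -(max η (q k1)) := h0.symm
            _ ≤ ⨆ k, -(max η (q k)) :=
              le_ciSup (Set.Finite.bddAbove (Set.finite_range fun j => -(max η (q j)))) k1
    refine ⟨η, ⟨hηpos, hgη, hmin⟩, ?_⟩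
    rintro y ⟨hy, hgy, -⟩
    by_contra hne
    rcases lt_or_gt_of_ne hne with h | h
    · have := sum_max_lt n q y η h (exists_pos_term n γ hγ (fun k => y - q k) (by rw [hgy]))
      rw [hgy] at this
      have : γ < g η := this
      rw [show g η = γ from hgη] at this
      exact absurd this (lt_irrefl γ)
    · have := sum_max_lt n q η y h ⟨k1, hk1⟩
      have h2 : γ < ∑ k, max (y - q k) 0 := by rw [← hgη']; exact this
      rw [hgy] at h2
      exact absurd h2 (lt_irrefl γ)
end

section
/- Primal recovery inequality: Suppose x* is optimal for (P) and w* is optimal for the dual (D), with ‖w*‖₂ ≤ R/3 where R = 3√n·p_max. Then for any x ≥ 0, f(x) − f(x*) ≥ −(R/(3√n))·(C − ∑_{k=1}^n x_k)_+, where f(x) = ∑_k f_k(x_k). -/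
/-- primal recovery inequality. If `x*` is optimal for (P) and `w*`
is a nonnegative optimal dual vector (so that the Lagrangian lower bound
`f(x*) ≤ f(x) − ⟨x, w*⟩ + C min_k w*_k` holds for all `x ≥ 0`) with
`‖w*‖₂ ≤ R/3`, `R = 3√n·p_max`, then for all `x ≥ 0`:
`f(x) − f(x*) ≥ −(R/(3√n))·(C − ∑ x_k)₊`. -/
theorem primal_recovery (n : ℕ) (hn : 0 < n) (C : ℝ) (hC : 0 < C)
    (f : Fin n → ℝ → ℝ) (pmax R : ℝ) (hRdef : R = 3 * Real.sqrt n * pmax)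
    (xs : Fin n → ℝ) (w : EuclideanSpace ℝ (Fin n))
    (hw0 : ∀ k, 0 ≤ w k) (hwnorm : ‖w‖ ≤ R / 3)
    (hLag : ∀ x : Fin n → ℝ, (∀ k, 0 ≤ x k) →
      (∑ k, f k (xs k)) ≤ (∑ k, f k (x k)) - (∑ k, w k * x k) + C * ⨅ k, w k) :
    ∀ x : Fin n → ℝ, (∀ k, 0 ≤ x k) →
      -(R / (3 * Real.sqrt n)) * max (C - ∑ k, x k) 0 ≤
        (∑ k, f k (x k)) - ∑ k, f k (xs k) := by
  intro x hx
  set m := ⨅ k, w k with hmdef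
  have hfinite : ∀ k : Fin n, m ≤ w k := fun k =>
    ciInf_le (Set.Finite.bddBelow (Set.finite_range w)) k
  have hm0 : 0 ≤ m := have : Nonempty (Fin n) := Fin.pos_iff_nonempty.mp hn; le_ciInf hw0
  have hn' : (0:ℝ) < n := by exact_mod_cast hn
  have hsn : 0 < Real.sqrt n := Real.sqrt_pos.mpr hn'
  have hnorm2 : ‖w‖ = Real.sqrt (∑ k, w k ^ 2) := by
    rw [EuclideanSpace.norm_eq]
    congr 1
    exact Finset.sum_congr rfl fun k _ => sq_abs (w k)
  have hkey : Real.sqrt n * m ≤ ‖w‖ := by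
    have h1 : (Real.sqrt n * m) ^ 2 ≤ ‖w‖ ^ 2 := by
      rw [mul_pow, Real.sq_sqrt hn'.le, hnorm2,
        Real.sq_sqrt (Finset.sum_nonneg fun k _ => sq_nonneg _)]
      calc (n:ℝ) * m ^ 2 = ∑ _k : Fin n, m ^ 2 := by
            simp [Finset.sum_const, mul_comm]
        _ ≤ ∑ k, w k ^ 2 :=
            Finset.sum_le_sum fun k _ => pow_le_pow_left₀ hm0 (hfinite k) 2
    have h2 := Real.sqrt_le_sqrt h1
    rwa [Real.sqrt_sq (by positivity), Real.sqrt_sq (norm_nonneg w)] at h2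
  have hmle : m ≤ R / (3 * Real.sqrt n) := by
    rw [le_div_iff₀ (by positivity)]
    nlinarith [hwnorm]
  have hS : m * (∑ k, x k) ≤ ∑ k, w k * x k := by
    rw [Finset.mul_sum]
    exact Finset.sum_le_sum fun k _ => mul_le_mul_of_nonneg_right (hfinite k) (hx k)
  have h := hLag x hx
  set M := max (C - ∑ k, x k) 0 with hMdef
  have hM0 : 0 ≤ M := le_max_right _ _
  have hCT : C - ∑ k, x k ≤ M := le_max_left _ _
  nlinarith [mul_le_mul_of_nonneg_right hmle hM0, mul_le_mul_of_nonneg_left hCT hm0]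
end
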